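/- For all real numbers t < T, x, k and all λ in (max(e^x − e^k, 0), e^x), writing Θ = BS^{−1}(t,T,x,k,λ), the second derivative of the inverse Black–Scholes map equals (BS^{−1})″(t,T,x,k,λ) = (Θ⁴(T−t)² − 4(x−k)²) / (4 (e^x φ(d1(t,T,x,k,Θ)) (T−t))² Θ³). -/

import Mathlib

noncomputable section

/-- Standard normal density. -/
def phi (z : ℝ) : ℝ := (Real.sqrt (2 * Real.pi))⁻¹ * Real.exp (-z ^ 2 / 2)

/-- Standard normal cumulative distribution function. -/
def N (y : ℝ) : ℝ := ∫ z in Set.Iic y, phi z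

/-- Black–Scholes auxiliary quantity `d₁`. -/
def d1 (t T x k σ : ℝ) : ℝ :=
  (x - k) / (σ * Real.sqrt (T - t)) + σ * Real.sqrt (T - t) / 2

/-- Black–Scholes auxiliary quantity `d₂`. -/
def d2 (t T x k σ : ℝ) : ℝ :=
  (x - k) / (σ * Real.sqrt (T - t)) - σ * Real.sqrt (T - t) / 2

/-- Black–Scholes call price with log-spot `x`, log-strike `k`,
time to maturity `T - t` and volatility `σ`. -/
def BS (t T x k σ : ℝ) : ℝ :=
  Real.exp x * N (d1 t T x k σ) - Real.exp k * N (d2 t T x k σ)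

/-- Inverse of the Black–Scholes price in the volatility argument on `(0, ∞)`. -/
def BSinv (t T x k l : ℝ) : ℝ := Function.invFunOn (BS t T x k) (Set.Ioi 0) l

/-! On `(0, ∞)` the price `σ ↦ BS σ` is strictly increasing with derivative the vega
`e^x φ(d1) √(T - t)` (the two `φ` terms combine because `e^k φ(d2) = e^x φ(d1)`), and it tends to
`max (e^x - e^k) 0` at `0⁺` and to `e^x` at `∞`; so on the given interval `BSinv` is its genuine
inverse. Differentiating an inverse function twice gives `BSinv'' = -vomma / vega ^ 3` at `Θ`,
where the vomma `∂vega/∂σ = vega d1 d2 / σ` comes from `φ' z = -z φ z` and `∂d1/∂σ = -d2 / σ`.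
Finally `d1 d2 = (x - k)² / (σ² (T - t)) - σ² (T - t) / 4` gives the stated formula. -/

open MeasureTheory ProbabilityTheory Set Filter Topology Function

lemma phi_eq_gaussianPDFReal : phi = gaussianPDFReal 0 1 := by
  ext z; simp [phi, gaussianPDFReal]

lemma phi_pos (z : ℝ) : 0 < phi z :=
  phi_eq_gaussianPDFReal ▸ gaussianPDFReal_pos 0 1 z one_ne_zero

lemma integrable_phi : Integrable phi :=
  phi_eq_gaussianPDFReal ▸ integrable_gaussianPDFReal 0 1

lemma hasDerivAt_phi (z : ℝ) : HasDerivAt phi (-z * phi z) z := by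
  have hexp : HasDerivAt (fun z : ℝ ↦ -z ^ 2 / 2) (-z) z :=
    (((hasDerivAt_pow 2 z).neg).div_const 2).congr_deriv (by ring)
  exact (hexp.exp.const_mul (Real.sqrt (2 * Real.pi))⁻¹).congr_deriv (by rw [phi]; ring)

lemma N_eq_cdf : N = cdf (gaussianReal 0 1) := by
  ext y
  rw [cdf_eq_real, measureReal_def, gaussianReal_apply_eq_integral _ one_ne_zero,
    ENNReal.toReal_ofReal (setIntegral_nonneg measurableSet_Iic fun z _ ↦
      gaussianPDFReal_nonneg 0 1 z), N, phi_eq_gaussianPDFReal]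

lemma tendsto_N_atTop : Tendsto N atTop (𝓝 1) := N_eq_cdf ▸ tendsto_cdf_atTop _

lemma tendsto_N_atBot : Tendsto N atBot (𝓝 0) := N_eq_cdf ▸ tendsto_cdf_atBot _

lemma hasDerivAt_N (y : ℝ) : HasDerivAt N (phi y) y := by
  have hcont : Continuous phi := by unfold phi; fun_prop
  have hN : N = fun y ↦ N 0 + ∫ z in (0 : ℝ)..y, phi z := by
    ext y
    rw [← intervalIntegral.integral_Iic_sub_Iic integrable_phi.integrableOn
      integrable_phi.integrableOn, N, N, add_sub_cancel]
  rw [hN]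
  exact (intervalIntegral.integral_hasDerivAt_right integrable_phi.intervalIntegrable
    (hcont.stronglyMeasurableAtFilter _ _) hcont.continuousAt).const_add _

lemma continuous_N : Continuous N :=
  continuous_iff_continuousAt.2 fun y ↦ (hasDerivAt_N y).continuousAt

lemma tendsto_N_inv_add_nhdsGT_zero (c a : ℝ) :
    Tendsto (fun σ ↦ N (c * σ⁻¹ + a * σ)) (𝓝[>] 0)
      (𝓝 (if 0 < c then 1 else if c < 0 then 0 else N 0)) := by
  have hlin : Tendsto (fun σ : ℝ ↦ a * σ) (𝓝[>] 0) (𝓝 0) := by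
    simpa using ((continuous_const_mul a).tendsto 0).mono_left nhdsWithin_le_nhds
  rcases lt_trichotomy c 0 with hc | rfl | hc
  · rw [if_neg hc.not_gt, if_pos hc]
    exact tendsto_N_atBot.comp
      ((tendsto_inv_nhdsGT_zero.const_mul_atTop_of_neg hc).atBot_add hlin)
  · simpa [comp_def] using (continuous_N.tendsto 0).comp hlin
  · rw [if_pos hc]
    exact tendsto_N_atTop.comp ((tendsto_inv_nhdsGT_zero.const_mul_atTop hc).atTop_add hlin)

namespace StrictMonoOn

variable {f f' f'' : ℝ → ℝ} {s : Set ℝ}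

lemma image_mem_nhds (hmono : StrictMonoOn f s) (hs : IsOpen s) (hf : ContinuousOn f s)
    {σ : ℝ} (hσ : σ ∈ s) : f '' s ∈ 𝓝 (f σ) := by
  obtain ⟨ε, hε, hball⟩ := Metric.isOpen_iff.1 hs σ hσ
  have hIcc : Icc (σ - ε / 2) (σ + ε / 2) ⊆ s := fun τ hτ ↦ hball <| by
    rw [Metric.mem_ball, Real.dist_eq, abs_sub_lt_iff]
    constructor <;> linarith [hτ.1, hτ.2]
  have hlo : σ - ε / 2 ∈ s := hIcc ⟨le_rfl, by linarith⟩
  have hhi : σ + ε / 2 ∈ s := hIcc ⟨by linarith, le_rfl⟩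
  refine mem_of_superset
    (Ioo_mem_nhds (hmono hlo hσ (by linarith)) (hmono hσ hhi (by linarith))) ?_
  exact (intermediate_value_Ioo (by linarith) (hf.mono hIcc)).trans
    (image_mono (Ioo_subset_Icc_self.trans hIcc))

lemma continuousAt_invFunOn (hmono : StrictMonoOn f s) (hs : IsOpen s)
    (hf : ContinuousOn f s) {y : ℝ} (hy : y ∈ f '' s) : ContinuousAt (invFunOn f s) y := by
  obtain ⟨σ, hσ, rfl⟩ := hy
  have hinv : MonotoneOn (invFunOn f s) (f '' s) := by
    rintro _ ⟨a, ha, rfl⟩ _ ⟨b, hb, rfl⟩ hab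
    rw [hmono.injOn.leftInvOn_invFunOn ha, hmono.injOn.leftInvOn_invFunOn hb]
    exact hmono.le_iff_le ha hb |>.1 hab
  refine continuousAt_of_monotoneOn_of_image_mem_nhds hinv (hmono.image_mem_nhds hs hf hσ) ?_
  rw [hmono.injOn.invFunOn_image subset_rfl]
  exact hs.mem_nhds (invFunOn_apply_mem hσ)

lemma hasDerivAt_invFunOn (hmono : StrictMonoOn f s) (hs : IsOpen s)
    (hf : ∀ σ ∈ s, HasDerivAt f (f' σ) σ) (hf' : ∀ σ ∈ s, f' σ ≠ 0) {y : ℝ} (hy : y ∈ f '' s) :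
    HasDerivAt (invFunOn f s) (f' (invFunOn f s y))⁻¹ y := by
  have hcont : ContinuousOn f s := fun σ hσ ↦ (hf σ hσ).continuousAt.continuousWithinAt
  obtain ⟨σ, hσ, rfl⟩ := hy
  have hmem := invFunOn_apply_mem (f := f) hσ
  refine (hf _ hmem).of_local_left_inverse (hmono.continuousAt_invFunOn hs hcont ⟨σ, hσ, rfl⟩)
    (hf' _ hmem) ?_
  filter_upwards [hmono.image_mem_nhds hs hcont hσ] with z hz using invFunOn_eq hz

lemma hasDerivAt_deriv_invFunOn (hmono : StrictMonoOn f s) (hs : IsOpen s)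
    (hf : ∀ σ ∈ s, HasDerivAt f (f' σ) σ) (hf' : ∀ σ ∈ s, f' σ ≠ 0)
    (hf'' : ∀ σ ∈ s, HasDerivAt f' (f'' σ) σ) {y : ℝ} (hy : y ∈ f '' s) :
    HasDerivAt (deriv (invFunOn f s))
      (-f'' (invFunOn f s y) / f' (invFunOn f s y) ^ 3) y := by
  have hcont : ContinuousOn f s := fun σ hσ ↦ (hf σ hσ).continuousAt.continuousWithinAt
  have hderiv : deriv (invFunOn f s) =ᶠ[𝓝 y] fun z ↦ (f' (invFunOn f s z))⁻¹ := by
    obtain ⟨σ, hσ, rfl⟩ := hy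
    filter_upwards [hmono.image_mem_nhds hs hcont hσ] with z hz
    exact (hmono.hasDerivAt_invFunOn hs hf hf' hz).deriv
  have hmem : invFunOn f s y ∈ s := invFunOn_mem hy
  refine HasDerivAt.congr_of_eventuallyEq ?_ hderiv
  refine (((hf'' _ hmem).comp y (hmono.hasDerivAt_invFunOn hs hf hf' hy)).inv
    (hf' _ hmem)).congr_deriv ?_
  rw [comp_apply]
  field_simp

end StrictMonoOn

section BlackScholes

variable {t T x k σ : ℝ}

def vega (t T x k σ : ℝ) : ℝ := Real.exp x * phi (d1 t T x k σ) * Real.sqrt (T - t)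

def vomma (t T x k σ : ℝ) : ℝ := vega t T x k σ * d1 t T x k σ * d2 t T x k σ / σ

lemma d1_eq (t T x k σ : ℝ) :
    d1 t T x k σ = (x - k) / Real.sqrt (T - t) * σ⁻¹ + Real.sqrt (T - t) / 2 * σ := by
  rw [d1]; ring

lemma d2_eq (t T x k σ : ℝ) :
    d2 t T x k σ = (x - k) / Real.sqrt (T - t) * σ⁻¹ + -(Real.sqrt (T - t) / 2) * σ := by
  rw [d2]; ring

lemma d1_sub_d2 (t T x k σ : ℝ) : d1 t T x k σ - d2 t T x k σ = σ * Real.sqrt (T - t) := by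
  rw [d1, d2]; ring

lemma sq_d1_sub_sq_d2 (htT : t < T) (hσ : σ ≠ 0) :
    d1 t T x k σ ^ 2 - d2 t T x k σ ^ 2 = 2 * (x - k) := by
  have hs : Real.sqrt (T - t) ≠ 0 := (Real.sqrt_pos.2 (sub_pos.2 htT)).ne'
  rw [d1, d2]; field_simp; ring

lemma hasDerivAt_d1 (hσ : σ ≠ 0) : HasDerivAt (d1 t T x k) (-d2 t T x k σ / σ) σ := by
  rw [funext (d1_eq t T x k)]
  refine (((hasDerivAt_inv hσ).const_mul _).add ((hasDerivAt_id σ).const_mul _)).congr_deriv ?_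
  rw [d2_eq]; field_simp; ring

lemma hasDerivAt_d2 (hσ : σ ≠ 0) : HasDerivAt (d2 t T x k) (-d1 t T x k σ / σ) σ := by
  rw [funext (d2_eq t T x k)]
  refine (((hasDerivAt_inv hσ).const_mul _).add ((hasDerivAt_id σ).const_mul _)).congr_deriv ?_
  rw [d1_eq]; field_simp; ring

lemma exp_mul_phi_d2 (htT : t < T) (hσ : σ ≠ 0) :
    Real.exp k * phi (d2 t T x k σ) = Real.exp x * phi (d1 t T x k σ) := by
  have h : k + -d2 t T x k σ ^ 2 / 2 = x + -d1 t T x k σ ^ 2 / 2 := by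
    linarith [sq_d1_sub_sq_d2 (x := x) (k := k) htT hσ]
  simp only [phi, mul_left_comm (Real.exp _), ← Real.exp_add, h]

lemma vega_pos (htT : t < T) : 0 < vega t T x k σ :=
  mul_pos (mul_pos (Real.exp_pos x) (phi_pos _)) (Real.sqrt_pos.2 (sub_pos.2 htT))

lemma hasDerivAt_BS (htT : t < T) (hσ : σ ≠ 0) :
    HasDerivAt (BS t T x k) (vega t T x k σ) σ := by
  have h1 := (hasDerivAt_N _).comp σ (hasDerivAt_d1 (t := t) (T := T) (x := x) (k := k) hσ)
  have h2 := (hasDerivAt_N _).comp σ (hasDerivAt_d2 (t := t) (T := T) (x := x) (k := k) hσ)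
  refine ((h1.const_mul (Real.exp x)).sub (h2.const_mul (Real.exp k))).congr_deriv ?_
  have hslope : (d1 t T x k σ - d2 t T x k σ) / σ = Real.sqrt (T - t) := by
    rw [d1_sub_d2, mul_div_cancel_left₀ _ hσ]
  rw [← mul_assoc (Real.exp k), exp_mul_phi_d2 htT hσ, vega, ← hslope]
  ring

lemma hasDerivAt_vega (hσ : σ ≠ 0) :
    HasDerivAt (vega t T x k) (vomma t T x k σ) σ := by
  have h := (hasDerivAt_phi _).comp σ (hasDerivAt_d1 (t := t) (T := T) (x := x) (k := k) hσ)
  refine ((h.const_mul (Real.exp x)).mul_const (Real.sqrt (T - t))).congr_deriv ?_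
  rw [vomma, vega]; ring

lemma strictMonoOn_BS (htT : t < T) : StrictMonoOn (BS t T x k) (Ioi 0) := by
  refine strictMonoOn_of_deriv_pos (convex_Ioi 0)
    (fun σ hσ ↦ (hasDerivAt_BS htT (ne_of_gt hσ)).continuousAt.continuousWithinAt) ?_
  intro σ hσ
  rw [interior_Ioi] at hσ
  rw [(hasDerivAt_BS htT (ne_of_gt hσ)).deriv]
  exact vega_pos htT

lemma tendsto_BS_atTop (htT : t < T) : Tendsto (BS t T x k) atTop (𝓝 (Real.exp x)) := by
  have ha : 0 < Real.sqrt (T - t) / 2 := by have := Real.sqrt_pos.2 (sub_pos.2 htT); positivity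
  have hinv : Tendsto (fun σ : ℝ ↦ (x - k) / Real.sqrt (T - t) * σ⁻¹) atTop (𝓝 0) := by
    simpa using tendsto_inv_atTop_zero.const_mul ((x - k) / Real.sqrt (T - t))
  have hd1 : Tendsto (d1 t T x k) atTop atTop := by
    rw [funext (d1_eq t T x k)]
    exact hinv.add_atTop (tendsto_id.const_mul_atTop ha)
  have hd2 : Tendsto (d2 t T x k) atTop atBot := by
    rw [funext (d2_eq t T x k)]
    exact hinv.add_atBot (tendsto_id.const_mul_atTop_of_neg (neg_lt_zero.2 ha))
  have h := ((tendsto_N_atTop.comp hd1).const_mul (Real.exp x)).sub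
    ((tendsto_N_atBot.comp hd2).const_mul (Real.exp k))
  rwa [mul_one, mul_zero, sub_zero] at h

lemma tendsto_BS_nhdsGT_zero (htT : t < T) :
    Tendsto (BS t T x k) (𝓝[>] 0) (𝓝 (max (Real.exp x - Real.exp k) 0)) := by
  have hs := Real.sqrt_pos.2 (sub_pos.2 htT)
  set c := (x - k) / Real.sqrt (T - t)
  have h := ((tendsto_N_inv_add_nhdsGT_zero c (Real.sqrt (T - t) / 2)).const_mul (Real.exp x)).sub
    ((tendsto_N_inv_add_nhdsGT_zero c (-(Real.sqrt (T - t) / 2))).const_mul (Real.exp k))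
  rw [← sub_mul] at h
  convert h using 1
  · ext σ; rw [BS, d1_eq, d2_eq]
  · congr 1
    rcases lt_trichotomy x k with hxk | rfl | hxk
    · have hc : c < 0 := div_neg_of_neg_of_pos (sub_neg.2 hxk) hs
      simp [hc, hc.not_gt, Real.exp_le_exp.2 hxk.le]
    · simp
    · have hc : 0 < c := div_pos (sub_pos.2 hxk) hs
      simp [hc, Real.exp_le_exp.2 hxk.le]

lemma Ioo_subset_image_BS (htT : t < T) :
    Ioo (max (Real.exp x - Real.exp k) 0) (Real.exp x) ⊆ BS t T x k '' Ioi 0 := by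
  intro l hl
  obtain ⟨a, hal, ha⟩ := (((tendsto_BS_nhdsGT_zero htT).eventually (eventually_lt_nhds hl.1)).and
    self_mem_nhdsWithin).exists
  obtain ⟨b, hlb, hab⟩ := (((tendsto_BS_atTop htT).eventually (eventually_gt_nhds hl.2)).and
    (eventually_gt_atTop a)).exists
  have hcont : ContinuousOn (BS t T x k) (Icc a b) := fun σ hσ ↦
    (hasDerivAt_BS htT (ha.trans_le hσ.1).ne').continuousAt.continuousWithinAt
  obtain ⟨σ, hσ, rfl⟩ := intermediate_value_Ioo hab.le hcont ⟨hal, hlb⟩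
  exact ⟨σ, ha.trans hσ.1, rfl⟩

lemma neg_vomma_div_vega_pow_three (htT : t < T) (hσ : σ ≠ 0) :
    -vomma t T x k σ / vega t T x k σ ^ 3 =
      (σ ^ 4 * (T - t) ^ 2 - 4 * (x - k) ^ 2) /
        (4 * (Real.exp x * phi (d1 t T x k σ) * (T - t)) ^ 2 * σ ^ 3) := by
  have hd : d1 t T x k σ * d2 t T x k σ =
      (x - k) ^ 2 / (σ * Real.sqrt (T - t)) ^ 2 - (σ * Real.sqrt (T - t)) ^ 2 / 4 := by
    rw [d1, d2]; ring
  have hP := (phi_pos (d1 t T x k σ)).ne'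
  have hτ : T - t = Real.sqrt (T - t) ^ 2 := (Real.sq_sqrt (sub_pos.2 htT).le).symm
  have hs := (Real.sqrt_pos.2 (sub_pos.2 htT)).ne'
  rw [vomma, mul_assoc, hd, vega]
  generalize Real.sqrt (T - t) = s at hτ hs ⊢
  rw [hτ]
  field_simp
  ring

end BlackScholes

theorem bsinv_second_derivative (t T x k l : ℝ) (htT : t < T)
    (hl : l ∈ Set.Ioo (max (Real.exp x - Real.exp k) 0) (Real.exp x)) :
    iteratedDeriv 2 (fun p => BSinv t T x k p) l =
      ((BSinv t T x k l) ^ 4 * (T - t) ^ 2 - 4 * (x - k) ^ 2) /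
        (4 * (Real.exp x * phi (d1 t T x k (BSinv t T x k l)) * (T - t)) ^ 2
          * (BSinv t T x k l) ^ 3) := by
  have hl' : l ∈ BS t T x k '' Ioi 0 := Ioo_subset_image_BS htT hl
  have hΘ : BSinv t T x k l ∈ Ioi 0 := invFunOn_mem hl'
  have h2 := (strictMonoOn_BS htT).hasDerivAt_deriv_invFunOn isOpen_Ioi
    (fun σ hσ ↦ hasDerivAt_BS htT (ne_of_gt hσ)) (fun σ _ ↦ (vega_pos htT).ne')
    (fun σ hσ ↦ hasDerivAt_vega (ne_of_gt hσ)) hl'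
  rw [iteratedDeriv_succ, iteratedDeriv_one]
  exact h2.deriv.trans (neg_vomma_div_vega_pow_three htT (ne_of_gt hΘ))
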